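/- arXiv:2512.14214 — 3 statements merged into one kernel-verified Lean document; each statement's English description precedes it below -/
import Mathlib

section
/- Suppose Φ is Lipschitz continuous with constant |Φ|_Lip, h is integrable on [0,∞) with |Φ|_Lip·‖h‖₁ < 1, ξ is bounded on [0,∞), and λ : [0,∞) → [0,∞) is a locally bounded nonnegative solution of λ(t) = Φ(ξ(t) + ∫₀^t h(t−s)λ(s) ds). Then λ is bounded on [0,∞), with sup_{t≥0} λ(t) ≤ (Φ(0) + |Φ|_Lip·‖ξ‖_∞)/(1 − |Φ|_Lip·‖h‖₁). -/
/-!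
Fix a horizon `T` and let `S` be the supremum of `λ` on `[0, T]`, finite by local boundedness.
For `t ≤ T` the memory term is at most `‖h‖₁ S` in absolute value, so the Lipschitz bound
`Φ x ≤ Φ 0 + |Φ|_Lip |x|` gives `λ t ≤ Φ 0 + |Φ|_Lip ‖ξ‖_∞ + |Φ|_Lip ‖h‖₁ S`. Taking the supremum
over `t ≤ T` and using `|Φ|_Lip ‖h‖₁ < 1` solves this for `S`, with a bound independent of `T`.
-/

open MeasureTheory Set

lemma le_div_one_sub_of_forall_le_add_mul_sSup {α : Type*} {f : α → ℝ} {s : Set α} {A q : ℝ}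
    (hs : s.Nonempty) (hf : BddAbove (f '' s)) (hq : q < 1)
    (h : ∀ t ∈ s, f t ≤ A + q * sSup (f '' s)) :
    ∀ t ∈ s, f t ≤ A / (1 - q) := by
  have hsup : sSup (f '' s) ≤ A + q * sSup (f '' s) :=
    csSup_le (hs.image f) (forall_mem_image.2 h)
  intro t ht
  calc f t ≤ sSup (f '' s) := le_csSup hf (mem_image_of_mem f ht)
    _ ≤ A / (1 - q) := by rw [le_div_iff₀ (by linarith)]; linarith

lemma intervalIntegral_abs_le_integral_Ici {h : ℝ → ℝ} (hh : IntegrableOn h (Ici 0)) {t : ℝ}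
    (ht : 0 ≤ t) : ∫ u in (0:ℝ)..t, |h u| ≤ ∫ u in Ici (0:ℝ), |h u| := by
  rw [intervalIntegral.integral_of_le ht]
  exact setIntegral_mono_set hh.abs (ae_of_all _ fun u => abs_nonneg _)
    (Ioc_subset_Icc_self.trans Icc_subset_Ici_self).eventuallyLE

lemma abs_intervalIntegral_comp_sub_mul_le {h f : ℝ → ℝ} (hh : IntegrableOn h (Ici 0))
    {t S : ℝ} (ht : 0 ≤ t) (hf : ∀ s ∈ Icc 0 t, |f s| ≤ S) :
    |∫ s in (0:ℝ)..t, h (t - s) * f s| ≤ (∫ u in Ici (0:ℝ), |h u|) * S := by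
  have hS : 0 ≤ S := (abs_nonneg _).trans (hf 0 ⟨le_rfl, ht⟩)
  have hint : IntervalIntegrable (fun u => |h u|) volume 0 t :=
    (intervalIntegrable_iff_integrableOn_Ioc_of_le ht).2 (hh.mono_set (Ioc_subset_Icc_self.trans Icc_subset_Ici_self)).abs
  have hint_refl : IntervalIntegrable (fun s => |h (t - s)|) volume 0 t := by
    simpa using (hint.comp_sub_left t).symm
  calc |∫ s in (0:ℝ)..t, h (t - s) * f s|
      ≤ ∫ s in (0:ℝ)..t, |h (t - s)| * S := by
        rw [← Real.norm_eq_abs]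
        refine intervalIntegral.norm_integral_le_of_norm_le ht (ae_of_all _ fun s hs => ?_)
          (hint_refl.mul_const S)
        rw [Real.norm_eq_abs, abs_mul]
        exact mul_le_mul_of_nonneg_left (hf s (Ioc_subset_Icc_self hs)) (abs_nonneg _)
    _ = (∫ u in (0:ℝ)..t, |h u|) * S := by
        rw [intervalIntegral.integral_mul_const,
          intervalIntegral.integral_comp_sub_left (fun u => |h u|), sub_self, sub_zero]
    _ ≤ (∫ u in Ici (0:ℝ), |h u|) * S :=
        mul_le_mul_of_nonneg_right (intervalIntegral_abs_le_integral_Ici hh ht) hS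

lemma le_of_eq_apply_add_conv {Φ h ξ f : ℝ → ℝ} {L C S t : ℝ}
    (hLip : ∀ x y : ℝ, |Φ x - Φ y| ≤ L * |x - y|) (hh : IntegrableOn h (Ici 0))
    (ht : 0 ≤ t) (hξ : |ξ t| ≤ C) (hf : ∀ s ∈ Icc 0 t, |f s| ≤ S)
    (heq : f t = Φ (ξ t + ∫ s in (0:ℝ)..t, h (t - s) * f s)) :
    f t ≤ Φ 0 + L * C + L * (∫ u in Ici (0:ℝ), |h u|) * S := by
  have hL : 0 ≤ L := (abs_nonneg _).trans (by simpa using hLip 1 0)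
  set I := ∫ s in (0:ℝ)..t, h (t - s) * f s
  have hI : |I| ≤ (∫ u in Ici (0:ℝ), |h u|) * S := abs_intervalIntegral_comp_sub_mul_le hh ht hf
  calc f t = Φ (ξ t + I) := heq
    _ ≤ Φ 0 + L * |ξ t + I| := by
        have := (le_abs_self _).trans (hLip (ξ t + I) 0)
        rw [sub_zero] at this
        linarith
    _ ≤ Φ 0 + L * (C + (∫ u in Ici (0:ℝ), |h u|) * S) := by
        gcongr
        exact (abs_add_le _ _).trans (add_le_add hξ hI)
    _ = Φ 0 + L * C + L * (∫ u in Ici (0:ℝ), |h u|) * S := by ring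

theorem bounded_subcritical_general
    (Φ h ξ lam : ℝ → ℝ) (L Cξ : ℝ)
    (hLip : ∀ x y : ℝ, |Φ x - Φ y| ≤ L * |x - y|)
    (hh : IntegrableOn h (Ici 0))
    (hsub : L * ∫ u in Ici (0:ℝ), |h u| < 1)
    (hξbdd : ∀ t ≥ (0:ℝ), |ξ t| ≤ Cξ)
    (hlam_nonneg : ∀ t, 0 ≤ lam t)
    (hlam_locbdd : ∀ T > (0:ℝ), ∃ C : ℝ, ∀ t ∈ Icc (0:ℝ) T, lam t ≤ C)
    (heq : ∀ t ≥ (0:ℝ), lam t = Φ (ξ t + ∫ s in (0:ℝ)..t, h (t - s) * lam s)) :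
    ∀ t ≥ (0:ℝ),
      lam t ≤ (Φ 0 + L * Cξ) / (1 - L * ∫ u in Ici (0:ℝ), |h u|) := by
  intro t₀ ht₀
  obtain ⟨C, hC⟩ := hlam_locbdd (t₀ + 1) (by linarith)
  have hbdd : BddAbove (lam '' Icc 0 (t₀ + 1)) := ⟨C, forall_mem_image.2 hC⟩
  refine le_div_one_sub_of_forall_le_add_mul_sSup ⟨0, left_mem_Icc.2 (by linarith)⟩ hbdd hsub
    ?_ t₀ ⟨ht₀, by linarith⟩
  intro t ht
  refine le_of_eq_apply_add_conv hLip hh ht.1 (hξbdd t ht.1) (fun s hs => ?_) (heq t ht.1)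
  rw [abs_of_nonneg (hlam_nonneg s)]
  exact le_csSup hbdd (mem_image_of_mem lam ⟨hs.1, hs.2.trans ht.2⟩)

/-- Strong subcriticality implies boundedness of the solution, with the explicit bound
sup λ ≤ (Φ(0) + |Φ|_Lip ‖ξ‖_∞)/(1 − |Φ|_Lip ‖h‖₁). -/
theorem bounded_subcritical
    (Φ h ξ lam : ℝ → ℝ) (L Cξ : ℝ)
    (hLip : ∀ x y : ℝ, |Φ x - Φ y| ≤ L * |x - y|)
    (hΦpos : ∀ x, 0 ≤ Φ x)
    (hh : IntegrableOn h (Ici 0))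
    (hsub : L * ∫ u in Ici (0:ℝ), |h u| < 1)
    (hξbdd : ∀ t ≥ (0:ℝ), |ξ t| ≤ Cξ)
    (hlam_nonneg : ∀ t, 0 ≤ lam t)
    (hlam_locbdd : ∀ T > (0:ℝ), ∃ C : ℝ, ∀ t ∈ Icc (0:ℝ) T, lam t ≤ C)
    (hlam_meas : Measurable lam)
    (heq : ∀ t ≥ (0:ℝ), lam t = Φ (ξ t + ∫ s in (0:ℝ)..t, h (t - s) * lam s)) :
    ∀ t ≥ (0:ℝ),
      lam t ≤ (Φ 0 + L * Cξ) / (1 - L * ∫ u in Ici (0:ℝ), |h u|) :=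
  bounded_subcritical_general Φ h ξ lam L Cξ hLip hh hsub hξbdd hlam_nonneg hlam_locbdd heq
end

section
/- (Comparison principle.) Let h : [0,∞) → [0,∞) be nonnegative and locally integrable, ξ : [0,∞) → ℝ continuous and locally bounded, and let Φ₁, Φ₂ : ℝ → [0,∞) be Lipschitz continuous with Φ₁ nondecreasing and Φ₁(x) ≤ Φ₂(x) for all x. Let λ₁, λ₂ be the continuous solutions of λᵢ(t) = Φᵢ(ξ(t) + ∫₀^t h(t−s) λᵢ(s) ds). Then λ₁(t) ≤ λ₂(t) for all t ≥ 0. -/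
/-!
Write `d = (λ₁ - λ₂)⁺`. Since `Φ₁` is monotone, `L₁`-Lipschitz and below `Φ₂`,
`Φ₁ x - Φ₂ y ≤ L₁ (x - y)⁺`, so `d` satisfies the linear Volterra inequality
`d t ≤ L₁ ∫₀ᵗ h (t - s) d(s) ds`. Such a `d` vanishes: choose `δ` with `L₁ ∫₀^δ h ≤ 1/2`; if `d`
vanishes on `[0, a]`, then on `[0, a + δ]` its maximum `M` satisfies `M ≤ M / 2`, and steps of
length `δ` exhaust `[0, ∞)`.
-/

open MeasureTheory Set

lemma lipschitz_const_nonneg {Φ : ℝ → ℝ} {L : ℝ} (hLip : ∀ x y, |Φ x - Φ y| ≤ L * |x - y|) :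
    0 ≤ L := by
  simpa using (abs_nonneg _).trans (hLip 1 0)

lemma sub_le_mul_posPart_of_monotone_of_le {Φ₁ Φ₂ : ℝ → ℝ} {L : ℝ}
    (hLip : ∀ x y, |Φ₁ x - Φ₁ y| ≤ L * |x - y|) (hmono : Monotone Φ₁) (hle : ∀ x, Φ₁ x ≤ Φ₂ x)
    (x y : ℝ) : Φ₁ x - Φ₂ y ≤ L * (x - y)⁺ := by
  rcases le_total x y with hxy | hxy
  · rw [posPart_eq_zero.2 (sub_nonpos.2 hxy), mul_zero]
    linarith [hmono hxy, hle y]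
  · rw [posPart_eq_self.2 (sub_nonneg.2 hxy)]
    calc Φ₁ x - Φ₂ y ≤ Φ₁ x - Φ₁ y := by linarith [hle y]
      _ ≤ L * |x - y| := (le_abs_self _).trans (hLip x y)
      _ = L * (x - y) := by rw [abs_of_nonneg (sub_nonneg.2 hxy)]

section Kernel

variable {k : ℝ → ℝ}

lemma intervalIntegrable_of_integrableOn_Icc (hk : ∀ T > 0, IntegrableOn k (Icc 0 T)) {T : ℝ}
    (hT : 0 ≤ T) : IntervalIntegrable k volume 0 T := by
  rcases hT.eq_or_lt with rfl | hT
  · exact IntervalIntegrable.refl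
  · exact (intervalIntegrable_iff_integrableOn_Icc_of_le hT.le).2 (hk T hT)

lemma IntervalIntegrable.kernel_mul {t : ℝ} (hk : IntervalIntegrable k volume 0 t) {g : ℝ → ℝ}
    (hg : Continuous g) : IntervalIntegrable (fun s => k (t - s) * g s) volume 0 t := by
  have hrefl := hk.comp_sub_left t
  rw [sub_zero, sub_self] at hrefl
  exact hrefl.symm.mul_continuousOn hg.continuousOn

lemma integral_kernel_mul_sub_le {t : ℝ} (ht : 0 ≤ t) (hk_nonneg : ∀ s ≥ 0, 0 ≤ k s)
    (hk : IntervalIntegrable k volume 0 t) {f g : ℝ → ℝ} (hf : Continuous f) (hg : Continuous g) :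
    (∫ s in (0:ℝ)..t, k (t - s) * f s) - ∫ s in (0:ℝ)..t, k (t - s) * g s
      ≤ ∫ s in (0:ℝ)..t, k (t - s) * (f s - g s)⁺ := by
  rw [← intervalIntegral.integral_sub (hk.kernel_mul hf) (hk.kernel_mul hg)]
  refine intervalIntegral.integral_mono_on ht ((hk.kernel_mul hf).sub (hk.kernel_mul hg))
    (hk.kernel_mul ((hf.sub hg).max continuous_const)) fun s hs => ?_
  rw [← mul_sub]
  exact mul_le_mul_of_nonneg_left (le_posPart _) (hk_nonneg _ (sub_nonneg.2 hs.2))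

lemma exists_pos_forall_mul_integral_le (hk : IntegrableOn k (Icc 0 1)) (C : ℝ) {ε : ℝ}
    (hε : 0 < ε) : ∃ δ > 0, ∀ u ∈ Icc 0 δ, C * ∫ s in (0:ℝ)..u, k s ≤ ε := by
  have hprim := intervalIntegral.continuousOn_primitive_interval (μ := volume)
    (by rwa [uIcc_of_le zero_le_one])
  have hcont := ((hprim 0 left_mem_uIcc).const_mul C).tendsto
  rw [uIcc_of_le zero_le_one, nhdsWithin_Icc_eq_nhdsGE one_pos, intervalIntegral.integral_same,
    mul_zero] at hcont
  obtain ⟨δ, hδ, hsub⟩ := mem_nhdsGE_iff_exists_Icc_subset.1 (hcont.eventually_lt_const hε)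
  exact ⟨δ, hδ, fun u hu => (hsub hu).le⟩

lemma integral_kernel_mul_le_of_eq_zero_on_Icc {d : ℝ → ℝ} {a t M : ℝ} (ha : 0 ≤ a) (hat : a ≤ t)
    (hk_nonneg : ∀ s ≥ 0, 0 ≤ k s) (hk : IntervalIntegrable k volume 0 t) (hd : Continuous d)
    (hzero : ∀ s ∈ Icc 0 a, d s = 0) (hM : ∀ s ∈ Icc a t, d s ≤ M) :
    ∫ s in (0:ℝ)..t, k (t - s) * d s ≤ M * ∫ s in (0:ℝ)..(t - a), k s := by
  have ha_mem : a ∈ uIcc 0 t := mem_uIcc_of_le ha hat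
  have hint := hk.kernel_mul hd
  have hint_const := (hk.kernel_mul (continuous_const (y := M))).mono_set
    (uIcc_subset_uIcc ha_mem right_mem_uIcc)
  have hvanish : ∫ s in (0:ℝ)..a, k (t - s) * d s = 0 := by
    rw [intervalIntegral.integral_congr (g := fun _ => 0) fun s hs => ?_,
      intervalIntegral.integral_zero]
    rw [uIcc_of_le ha] at hs
    simp only [hzero s hs, mul_zero]
  calc ∫ s in (0:ℝ)..t, k (t - s) * d s = ∫ s in a..t, k (t - s) * d s := by
        rw [← intervalIntegral.integral_add_adjacent_intervals
          (hint.mono_set (uIcc_subset_uIcc left_mem_uIcc ha_mem))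
          (hint.mono_set (uIcc_subset_uIcc ha_mem right_mem_uIcc)), hvanish, zero_add]
    _ ≤ ∫ s in a..t, k (t - s) * M :=
        intervalIntegral.integral_mono_on hat
          (hint.mono_set (uIcc_subset_uIcc ha_mem right_mem_uIcc)) hint_const fun s hs =>
          mul_le_mul_of_nonneg_left (hM s hs) (hk_nonneg _ (sub_nonneg.2 hs.2))
    _ = M * ∫ s in (0:ℝ)..(t - a), k s := by
        rw [intervalIntegral.integral_mul_const, intervalIntegral.integral_comp_sub_left, sub_self,
          mul_comm]

lemma eq_zero_on_Icc_add_of_le_mul_integral_kernel {d : ℝ → ℝ} {C a δ : ℝ} (hC : 0 ≤ C)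
    (ha : 0 ≤ a) (hδ : 0 ≤ δ) (hk_nonneg : ∀ s ≥ 0, 0 ≤ k s)
    (hk_int : ∀ T > 0, IntegrableOn k (Icc 0 T))
    (hδ_small : ∀ u ∈ Icc 0 δ, C * ∫ s in (0:ℝ)..u, k s ≤ 1 / 2)
    (hd : Continuous d) (hd_nonneg : ∀ t, 0 ≤ d t)
    (hle : ∀ t ≥ 0, d t ≤ C * ∫ s in (0:ℝ)..t, k (t - s) * d s)
    (hzero : ∀ s ∈ Icc 0 a, d s = 0) : ∀ s ∈ Icc 0 (a + δ), d s = 0 := by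
  obtain ⟨t₀, ht₀, hmax⟩ :=
    (isCompact_Icc (a := 0) (b := a + δ)).exists_isMaxOn (nonempty_Icc.2 (by linarith)) hd.continuousOn
  suffices hM : d t₀ ≤ 0 from fun s hs => le_antisymm ((hmax hs).trans hM) (hd_nonneg s)
  rcases le_or_gt t₀ a with hle_a | hlt_a
  · exact (hzero t₀ ⟨ht₀.1, hle_a⟩).le
  have hbound := integral_kernel_mul_le_of_eq_zero_on_Icc ha hlt_a.le hk_nonneg
    (intervalIntegrable_of_integrableOn_Icc hk_int (ha.trans hlt_a.le)) hd hzero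
    fun s hs => hmax ⟨ha.trans hs.1, hs.2.trans ht₀.2⟩
  have hsmall := hδ_small (t₀ - a) ⟨by linarith, by linarith [ht₀.2]⟩
  have : d t₀ ≤ d t₀ / 2 :=
    calc d t₀ ≤ C * ∫ s in (0:ℝ)..t₀, k (t₀ - s) * d s := hle t₀ ht₀.1
      _ ≤ C * (d t₀ * ∫ s in (0:ℝ)..(t₀ - a), k s) := mul_le_mul_of_nonneg_left hbound hC
      _ = d t₀ * (C * ∫ s in (0:ℝ)..(t₀ - a), k s) := by ring
      _ ≤ d t₀ / 2 := by nlinarith [hd_nonneg t₀]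
  linarith

theorem nonpos_of_le_mul_integral_kernel_posPart {f : ℝ → ℝ} {C : ℝ} (hC : 0 ≤ C)
    (hk_nonneg : ∀ s ≥ 0, 0 ≤ k s) (hk_int : ∀ T > 0, IntegrableOn k (Icc 0 T))
    (hf : Continuous f) (hle : ∀ t ≥ 0, f t ≤ C * ∫ s in (0:ℝ)..t, k (t - s) * (f s)⁺) :
    ∀ t ≥ 0, f t ≤ 0 := by
  have hd_le : ∀ t ≥ 0, (f t)⁺ ≤ C * ∫ s in (0:ℝ)..t, k (t - s) * (f s)⁺ := fun t ht =>
    max_le (hle t ht) <| mul_nonneg hC <| intervalIntegral.integral_nonneg ht fun s hs =>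
      mul_nonneg (hk_nonneg _ (sub_nonneg.2 hs.2)) (posPart_nonneg _)
  obtain ⟨δ, hδ, hδ_small⟩ := exists_pos_forall_mul_integral_le (hk_int 1 one_pos) C one_half_pos
  have hvanish : ∀ n : ℕ, ∀ s ∈ Icc 0 (n * δ), (f s)⁺ = 0 := by
    intro n
    induction n with
    | zero =>
      intro s hs
      obtain rfl : s = 0 := by simpa using hs
      exact le_antisymm (by simpa using hd_le 0 le_rfl) (posPart_nonneg _)
    | succ n ih =>
      rw [Nat.cast_succ, add_one_mul]
      exact eq_zero_on_Icc_add_of_le_mul_integral_kernel hC (by positivity) hδ.le hk_nonneg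
        hk_int hδ_small (hf.max continuous_const) (fun t => posPart_nonneg _) hd_le ih
  intro t ht
  obtain ⟨n, hn⟩ := exists_nat_ge (t / δ)
  exact posPart_eq_zero.1 (hvanish n t ⟨ht, (div_le_iff₀ hδ).1 hn⟩)

end Kernel

theorem comparison_principle_general
    (Φ₁ Φ₂ h ξ lam₁ lam₂ : ℝ → ℝ) (L₁ : ℝ)
    (hh_nonneg : ∀ t ≥ (0:ℝ), 0 ≤ h t)
    (hh_locint : ∀ T > (0:ℝ), IntegrableOn h (Icc 0 T))
    (hLip₁ : ∀ x y : ℝ, |Φ₁ x - Φ₁ y| ≤ L₁ * |x - y|)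
    (hmono : Monotone Φ₁)
    (hle : ∀ x, Φ₁ x ≤ Φ₂ x)
    (hcont₁ : Continuous lam₁) (hcont₂ : Continuous lam₂)
    (heq₁ : ∀ t ≥ (0:ℝ), lam₁ t = Φ₁ (ξ t + ∫ s in (0:ℝ)..t, h (t - s) * lam₁ s))
    (heq₂ : ∀ t ≥ (0:ℝ), lam₂ t = Φ₂ (ξ t + ∫ s in (0:ℝ)..t, h (t - s) * lam₂ s)) :
    ∀ t ≥ (0:ℝ), lam₁ t ≤ lam₂ t := by
  have hL₁ : 0 ≤ L₁ := lipschitz_const_nonneg hLip₁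
  have hgap : ∀ t ≥ (0:ℝ),
      lam₁ t - lam₂ t ≤ L₁ * ∫ s in (0:ℝ)..t, h (t - s) * (lam₁ s - lam₂ s)⁺ := by
    intro t ht
    have hint := integral_kernel_mul_sub_le ht hh_nonneg
      (intervalIntegrable_of_integrableOn_Icc hh_locint ht) hcont₁ hcont₂
    have hnonneg : 0 ≤ ∫ s in (0:ℝ)..t, h (t - s) * (lam₁ s - lam₂ s)⁺ :=
      intervalIntegral.integral_nonneg ht fun s hs =>
        mul_nonneg (hh_nonneg _ (sub_nonneg.2 hs.2)) (posPart_nonneg _)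
    rw [heq₁ t ht, heq₂ t ht]
    refine (sub_le_mul_posPart_of_monotone_of_le hLip₁ hmono hle _ _).trans ?_
    rw [add_sub_add_left_eq_sub]
    exact mul_le_mul_of_nonneg_left (max_le hint hnonneg) hL₁
  intro t ht
  exact sub_nonpos.1 <| nonpos_of_le_mul_integral_kernel_posPart hL₁ hh_nonneg hh_locint
    (hcont₁.sub hcont₂) hgap t ht

/-- Comparison principle: if h ≥ 0, Φ₁ is nondecreasing and Φ₁ ≤ Φ₂ pointwise, then
the corresponding solutions of the nonlinear renewal equation satisfy λ₁ ≤ λ₂. -/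
theorem comparison_principle
    (Φ₁ Φ₂ h ξ lam₁ lam₂ : ℝ → ℝ) (L₁ L₂ : ℝ)
    (hh_nonneg : ∀ t ≥ (0:ℝ), 0 ≤ h t)
    (hh_locint : ∀ T > (0:ℝ), IntegrableOn h (Icc 0 T))
    (hξcont : Continuous ξ)
    (hξlocbdd : ∀ T > (0:ℝ), ∃ C : ℝ, ∀ t ∈ Icc (0:ℝ) T, |ξ t| ≤ C)
    (hLip₁ : ∀ x y : ℝ, |Φ₁ x - Φ₁ y| ≤ L₁ * |x - y|)
    (hLip₂ : ∀ x y : ℝ, |Φ₂ x - Φ₂ y| ≤ L₂ * |x - y|)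
    (hΦ₁pos : ∀ x, 0 ≤ Φ₁ x) (hΦ₂pos : ∀ x, 0 ≤ Φ₂ x)
    (hmono : Monotone Φ₁)
    (hle : ∀ x, Φ₁ x ≤ Φ₂ x)
    (hcont₁ : Continuous lam₁) (hcont₂ : Continuous lam₂)
    (heq₁ : ∀ t ≥ (0:ℝ), lam₁ t = Φ₁ (ξ t + ∫ s in (0:ℝ)..t, h (t - s) * lam₁ s))
    (heq₂ : ∀ t ≥ (0:ℝ), lam₂ t = Φ₂ (ξ t + ∫ s in (0:ℝ)..t, h (t - s) * lam₂ s)) :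
    ∀ t ≥ (0:ℝ), lam₁ t ≤ lam₂ t :=
  comparison_principle_general Φ₁ Φ₂ h ξ lam₁ lam₂ L₁ hh_nonneg hh_locint hLip₁ hmono hle hcont₁
    hcont₂ heq₁ heq₂
end

section
/- (Lipschitz stability in Φ, uniform version.) Let Φ₁, Φ₂ be Lipschitz continuous with |Φ₁|_Lip·‖h‖₁ < 1, h integrable on [0,∞), ξ locally bounded, and let λ₁, λ₂ be the corresponding solutions of λᵢ(t) = Φᵢ(ξ(t) + ∫₀^t h(t−s)λᵢ(s) ds). Then sup_{t≥0} |λ₁(t) − λ₂(t)| ≤ C·‖Φ₁ − Φ₂‖_∞ with C = 1/(1 − |Φ₁|_Lip·‖h‖₁). -/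
open MeasureTheory Set

/-!
Write `Δ = |λ₁ - λ₂|` and `I = ‖h‖₁`. At time `t` the two arguments of `Φ₁`, `Φ₂` differ by
`∫₀ᵗ h(t - s)(λ₁ - λ₂)(s) ds`, which is at most `I · sup_{[0,t]} Δ`; comparing `Φ₁` with `Φ₂` at the
same point costs at most `‖Φ₁ - Φ₂‖_∞`. Hence `M = sup_{[0,T]} Δ`, finite by local boundedness,
satisfies `M ≤ L₁ I M + ‖Φ₁ - Φ₂‖_∞`, and `L₁ I < 1` gives the bound uniformly in `T`.
-/

lemma nonneg_of_forall_abs_sub_le_mul {f : ℝ → ℝ} {L : ℝ}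
    (hf : ∀ x y, |f x - f y| ≤ L * |x - y|) : 0 ≤ L := by
  simpa using (abs_nonneg _).trans (hf 1 0)

lemma forall_le_div_one_sub_of_forall_le_mul_add {α : Type*} {Δ : α → ℝ} {s : Set α} {a D : ℝ}
    (hs : s.Nonempty) (hbdd : BddAbove (Δ '' s)) (ha : a < 1)
    (hself : ∀ M, (∀ x ∈ s, Δ x ≤ M) → ∀ x ∈ s, Δ x ≤ a * M + D) :
    ∀ x ∈ s, Δ x ≤ D / (1 - a) := by
  have hle_sup : ∀ x ∈ s, Δ x ≤ sSup (Δ '' s) := fun x hx => le_csSup hbdd (mem_image_of_mem Δ hx)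
  have hsup : sSup (Δ '' s) ≤ a * sSup (Δ '' s) + D :=
    csSup_le (hs.image Δ) (forall_mem_image.2 (hself _ hle_sup))
  intro x hx
  refine (hle_sup x hx).trans ?_
  rw [le_div_iff₀ (sub_pos.2 ha)]
  linarith

section Convolution

variable {h g : ℝ → ℝ} {t : ℝ}

lemma intervalIntegrable_comp_sub_left_of_integrableOn_Ici (hh : IntegrableOn h (Ici 0))
    (ht : 0 ≤ t) : IntervalIntegrable (fun s => h (t - s)) volume 0 t := by
  have : IntervalIntegrable h volume 0 t :=
    (intervalIntegrable_iff_integrableOn_Ioc_of_le ht).2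
      (hh.mono_set (Ioc_subset_Ioi_self.trans Ioi_subset_Ici_self))
  simpa using (this.comp_sub_left t).symm

lemma intervalIntegrable_conv_of_bounded {C : ℝ} (hh : IntegrableOn h (Ici 0)) (ht : 0 ≤ t)
    (hg : Measurable g) (hC : ∀ s ∈ Icc 0 t, |g s| ≤ C) :
    IntervalIntegrable (fun s => h (t - s) * g s) volume 0 t := by
  rw [intervalIntegrable_iff_integrableOn_Ioc_of_le ht]
  refine ((intervalIntegrable_iff_integrableOn_Ioc_of_le ht).1
    (intervalIntegrable_comp_sub_left_of_integrableOn_Ici hh ht)).mul_bdd (c := C)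
    hg.aestronglyMeasurable.restrict ?_
  exact (ae_restrict_iff' measurableSet_Ioc).2
    (ae_of_all _ fun s hs => hC s (Ioc_subset_Icc_self hs))

lemma abs_intervalIntegral_conv_le {M : ℝ} (hh : IntegrableOn h (Ici 0)) (ht : 0 ≤ t)
    (hM : ∀ s ∈ Icc 0 t, |g s| ≤ M) :
    |∫ s in (0:ℝ)..t, h (t - s) * g s| ≤ (∫ u in Ici (0:ℝ), |h u|) * M := by
  have hM₀ : 0 ≤ M := (abs_nonneg _).trans (hM 0 ⟨le_rfl, ht⟩)
  have hht := intervalIntegrable_comp_sub_left_of_integrableOn_Ici hh ht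
  calc |∫ s in (0:ℝ)..t, h (t - s) * g s|
      ≤ ∫ s in (0:ℝ)..t, |h (t - s)| * M := by
        rw [← Real.norm_eq_abs]
        refine intervalIntegral.norm_integral_le_of_norm_le ht
          (ae_of_all _ fun s hs => ?_) (hht.abs.mul_const M)
        rw [Real.norm_eq_abs, abs_mul]
        exact mul_le_mul_of_nonneg_left (hM s (Ioc_subset_Icc_self hs)) (abs_nonneg _)
    _ = (∫ u in (0:ℝ)..t, |h u|) * M := by
        rw [intervalIntegral.integral_mul_const,
          intervalIntegral.integral_comp_sub_left (fun u => |h u|)]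
        simp
    _ ≤ (∫ u in Ici (0:ℝ), |h u|) * M := by
        gcongr
        rw [intervalIntegral.integral_of_le ht]
        exact setIntegral_mono_set hh.abs (ae_of_all _ fun _ => abs_nonneg _)
          (Ioc_subset_Ioi_self.trans Ioi_subset_Ici_self).eventuallyLE

end Convolution

lemma abs_sub_le_of_renewal_eq {Φ₁ Φ₂ h ξ lam₁ lam₂ : ℝ → ℝ} {L D T C₁ C₂ M t : ℝ}
    (hLip : ∀ x y : ℝ, |Φ₁ x - Φ₁ y| ≤ L * |x - y|) (hD : ∀ x, |Φ₁ x - Φ₂ x| ≤ D)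
    (hh : IntegrableOn h (Ici 0)) (hlam₁ : Measurable lam₁) (hlam₂ : Measurable lam₂)
    (hC₁ : ∀ s ∈ Icc 0 T, |lam₁ s| ≤ C₁) (hC₂ : ∀ s ∈ Icc 0 T, |lam₂ s| ≤ C₂)
    (hM : ∀ s ∈ Icc 0 T, |lam₁ s - lam₂ s| ≤ M) (ht : t ∈ Icc 0 T)
    (heq₁ : lam₁ t = Φ₁ (ξ t + ∫ s in (0:ℝ)..t, h (t - s) * lam₁ s))
    (heq₂ : lam₂ t = Φ₂ (ξ t + ∫ s in (0:ℝ)..t, h (t - s) * lam₂ s)) :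
    |lam₁ t - lam₂ t| ≤ L * (∫ u in Ici (0:ℝ), |h u|) * M + D := by
  have hsub : Icc 0 t ⊆ Icc 0 T := Icc_subset_Icc_right ht.2
  set x₁ := ξ t + ∫ s in (0:ℝ)..t, h (t - s) * lam₁ s
  set x₂ := ξ t + ∫ s in (0:ℝ)..t, h (t - s) * lam₂ s
  have hx : x₁ - x₂ = ∫ s in (0:ℝ)..t, h (t - s) * (lam₁ s - lam₂ s) := by
    rw [add_sub_add_left_eq_sub, ← intervalIntegral.integral_sub
      (intervalIntegrable_conv_of_bounded hh ht.1 hlam₁ fun s hs => hC₁ s (hsub hs))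
      (intervalIntegrable_conv_of_bounded hh ht.1 hlam₂ fun s hs => hC₂ s (hsub hs))]
    simp only [mul_sub]
  calc |lam₁ t - lam₂ t| ≤ |Φ₁ x₁ - Φ₁ x₂| + |Φ₁ x₂ - Φ₂ x₂| := by
        rw [heq₁, heq₂]; exact abs_sub_le _ _ _
    _ ≤ L * ((∫ u in Ici (0:ℝ), |h u|) * M) + D := by
        gcongr
        · exact (hLip _ _).trans <| mul_le_mul_of_nonneg_left
            (hx ▸ abs_intervalIntegral_conv_le hh ht.1 fun s hs => hM s (hsub hs))
            (nonneg_of_forall_abs_sub_le_mul hLip)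
        · exact hD _
    _ = L * (∫ u in Ici (0:ℝ), |h u|) * M + D := by ring

theorem lipschitz_stability_uniform_general
    (Φ₁ Φ₂ h ξ lam₁ lam₂ : ℝ → ℝ) (L₁ D : ℝ)
    (hLip₁ : ∀ x y : ℝ, |Φ₁ x - Φ₁ y| ≤ L₁ * |x - y|)
    (hh : IntegrableOn h (Ici 0))
    (hsub : L₁ * ∫ u in Ici (0:ℝ), |h u| < 1)
    (hD : ∀ x, |Φ₁ x - Φ₂ x| ≤ D)
    (hlam₁_meas : Measurable lam₁) (hlam₂_meas : Measurable lam₂)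
    (hlam₁_locbdd : ∀ T > (0:ℝ), ∃ C : ℝ, ∀ t ∈ Icc (0:ℝ) T, |lam₁ t| ≤ C)
    (hlam₂_locbdd : ∀ T > (0:ℝ), ∃ C : ℝ, ∀ t ∈ Icc (0:ℝ) T, |lam₂ t| ≤ C)
    (heq₁ : ∀ t ≥ (0:ℝ), lam₁ t = Φ₁ (ξ t + ∫ s in (0:ℝ)..t, h (t - s) * lam₁ s))
    (heq₂ : ∀ t ≥ (0:ℝ), lam₂ t = Φ₂ (ξ t + ∫ s in (0:ℝ)..t, h (t - s) * lam₂ s)) :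
    ∀ t ≥ (0:ℝ),
      |lam₁ t - lam₂ t| ≤ D / (1 - L₁ * ∫ u in Ici (0:ℝ), |h u|) := by
  intro T hT
  obtain ⟨C₁, hC₁⟩ := hlam₁_locbdd (T + 1) (by linarith)
  obtain ⟨C₂, hC₂⟩ := hlam₂_locbdd (T + 1) (by linarith)
  have hIcc : Icc 0 T ⊆ Icc 0 (T + 1) := Icc_subset_Icc_right (by linarith)
  have hbdd : BddAbove ((fun s => |lam₁ s - lam₂ s|) '' Icc 0 T) := by
    refine ⟨C₁ + C₂, forall_mem_image.2 fun s hs => ?_⟩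
    exact (abs_sub _ _).trans (add_le_add (hC₁ s (hIcc hs)) (hC₂ s (hIcc hs)))
  refine forall_le_div_one_sub_of_forall_le_mul_add ⟨0, left_mem_Icc.2 hT⟩ hbdd hsub
    (fun M hM t ht => ?_) T ⟨hT, le_rfl⟩
  exact abs_sub_le_of_renewal_eq hLip₁ hD hh hlam₁_meas hlam₂_meas
    (fun s hs => hC₁ s (hIcc hs)) (fun s hs => hC₂ s (hIcc hs)) hM ht
    (heq₁ t ht.1) (heq₂ t ht.1)

/-- Lipschitz stability in Φ, uniform version: if |Φ₁|_Lip·‖h‖₁ < 1 then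
sup_t |λ₁(t) − λ₂(t)| ≤ ‖Φ₁ − Φ₂‖_∞ / (1 − |Φ₁|_Lip·‖h‖₁). -/
theorem lipschitz_stability_uniform
    (Φ₁ Φ₂ h ξ lam₁ lam₂ : ℝ → ℝ) (L₁ L₂ D : ℝ)
    (hLip₁ : ∀ x y : ℝ, |Φ₁ x - Φ₁ y| ≤ L₁ * |x - y|)
    (hLip₂ : ∀ x y : ℝ, |Φ₂ x - Φ₂ y| ≤ L₂ * |x - y|)
    (hΦ₁pos : ∀ x, 0 ≤ Φ₁ x) (hΦ₂pos : ∀ x, 0 ≤ Φ₂ x)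
    (hh : IntegrableOn h (Ici 0))
    (hsub : L₁ * ∫ u in Ici (0:ℝ), |h u| < 1)
    (hξlocbdd : ∀ T > (0:ℝ), ∃ C : ℝ, ∀ t ∈ Icc (0:ℝ) T, |ξ t| ≤ C)
    (hD : ∀ x, |Φ₁ x - Φ₂ x| ≤ D)
    (hlam₁_meas : Measurable lam₁) (hlam₂_meas : Measurable lam₂)
    (hlam₁_locbdd : ∀ T > (0:ℝ), ∃ C : ℝ, ∀ t ∈ Icc (0:ℝ) T, |lam₁ t| ≤ C)
    (hlam₂_locbdd : ∀ T > (0:ℝ), ∃ C : ℝ, ∀ t ∈ Icc (0:ℝ) T, |lam₂ t| ≤ C)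
    (heq₁ : ∀ t ≥ (0:ℝ), lam₁ t = Φ₁ (ξ t + ∫ s in (0:ℝ)..t, h (t - s) * lam₁ s))
    (heq₂ : ∀ t ≥ (0:ℝ), lam₂ t = Φ₂ (ξ t + ∫ s in (0:ℝ)..t, h (t - s) * lam₂ s)) :
    ∀ t ≥ (0:ℝ),
      |lam₁ t - lam₂ t| ≤ D / (1 - L₁ * ∫ u in Ici (0:ℝ), |h u|) :=
  lipschitz_stability_uniform_general Φ₁ Φ₂ h ξ lam₁ lam₂ L₁ D hLip₁ hh hsub hD hlam₁_meas
    hlam₂_meas hlam₁_locbdd hlam₂_locbdd heq₁ heq₂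
end
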